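/- arXiv:1907.04036 — 7 statements merged into one kernel-verified Lean document; each statement's English description precedes it below -/
import Mathlib

section
/- The set Γ = {r⁻ : r ∈ (0,1]} ∪ {q° : q ∈ ℚ ∩ [0,1]}, ordered by the unique total order with 0° as bottom, r* < s* iff r < s (for * ∈ {−,°}), and q° covering q⁻ for each rational q ∈ (0,1], is a linear order in which every subset has a supremum (i.e., it is a complete lattice). -/
open scoped Classical

noncomputable section

/-- Validity predicate: `(r, false)` encodes `r⁻` for `r ∈ (0,1]`;
`(q, true)` encodes `q°` for rational `q ∈ [0,1]`. -/
def GammaValid (x : ℝ × Bool) : Prop :=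
  (x.2 = false ∧ 0 < x.1 ∧ x.1 ≤ 1) ∨
  (x.2 = true ∧ 0 ≤ x.1 ∧ x.1 ≤ 1 ∧ ∃ q : ℚ, (q : ℝ) = x.1)

lemma gammaValid_of (r : ℝ) (b : Bool) (h0 : 0 ≤ r) (h1 : r ≤ 1)
    (hr : b = true → ∃ q : ℚ, (q : ℝ) = r) (hm : b = false → 0 < r) :
    GammaValid (r, b) := by
  cases b
  · exact Or.inl ⟨rfl, hm rfl, h1⟩
  · exact Or.inr ⟨rfl, h0, h1, hr rfl⟩

/-- The doubled unit interval `Γ`, ordered lexicographically: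
compare real values first, and `r⁻ < r°` at equal value. -/
abbrev Gamma : Type := {x : Lex (ℝ × Bool) // GammaValid (ofLex x)}

def Gamma.re (x : Gamma) : ℝ := (ofLex x.1).1
def Gamma.tag (x : Gamma) : Bool := (ofLex x.1).2

def Gamma.mk' (r : ℝ) (b : Bool) (h : GammaValid (r, b)) : Gamma := ⟨toLex (r, b), h⟩

@[simp] lemma Gamma.re_mk' (r : ℝ) (b : Bool) (h : GammaValid (r, b)) :
    (Gamma.mk' r b h).re = r := rfl
@[simp] lemma Gamma.tag_mk' (r : ℝ) (b : Bool) (h : GammaValid (r, b)) :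
    (Gamma.mk' r b h).tag = b := rfl

/-- `0°` -/
def gzero : Gamma :=
  Gamma.mk' 0 true (gammaValid_of _ _ le_rfl zero_le_one (fun _ => ⟨0, by norm_num⟩) (by simp))

/-- `1°` -/
def gone : Gamma :=
  Gamma.mk' 1 true (gammaValid_of _ _ zero_le_one le_rfl (fun _ => ⟨1, by norm_num⟩) (by simp))

/-- `q°` for a rational `q ∈ [0,1]`. -/
def mkCirc (q : ℚ) (h0 : 0 ≤ q) (h1 : q ≤ 1) : Gamma :=
  Gamma.mk' (q : ℝ) true
    (gammaValid_of _ _ (by exact_mod_cast h0) (by exact_mod_cast h1)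
      (fun _ => ⟨q, rfl⟩) (by simp))

/-- `r⁻` for a real `r ∈ (0,1]`. -/
def mkMinus (r : ℝ) (h0 : 0 < r) (h1 : r ≤ 1) : Gamma :=
  Gamma.mk' r false
    (gammaValid_of _ _ h0.le h1 (by simp) (fun _ => h0))

lemma Gamma.le_iff {x y : Gamma} :
    x ≤ y ↔ x.re < y.re ∨ (x.re = y.re ∧ x.tag ≤ y.tag) := by
  change x.1 ≤ y.1 ↔ _
  rw [show x.1 = toLex (ofLex x.1) from rfl, show y.1 = toLex (ofLex y.1) from rfl,
    Prod.Lex.le_iff]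
  rfl

lemma Gamma.re_nonneg (x : Gamma) : 0 ≤ x.re := by
  rcases x.2 with ⟨_, h, _⟩ | ⟨_, h, _⟩ <;> [exact le_of_lt h; exact h]

lemma Gamma.re_le_one (x : Gamma) : x.re ≤ 1 := by
  rcases x.2 with ⟨_, _, h⟩ | ⟨_, _, h, _⟩ <;> exact h

lemma Gamma.tag_rat {x : Gamma} (h : x.tag = true) : ∃ q : ℚ, (q : ℝ) = x.re := by
  rcases x.2 with ⟨h', _⟩ | ⟨_, _, _, hq⟩
  · exact absurd (h'.symm.trans h) (by simp)
  · exact hq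

lemma Gamma.tag_pos {x : Gamma} (h : x.tag = false) : 0 < x.re := by
  rcases x.2 with ⟨_, h', _⟩ | ⟨h', _⟩
  · exact h'
  · exact absurd (h'.symm.trans h) (by simp)

lemma Gamma.re_mono {x y : Gamma} (h : x ≤ y) : x.re ≤ y.re := by
  rcases Gamma.le_iff.1 h with h | ⟨h, _⟩
  · exact le_of_lt h
  · exact le_of_eq h

lemma Gamma.ext' {x y : Gamma} (hre : x.re = y.re) (htag : x.tag = y.tag) : x = y := by
  apply Subtype.ext
  have hx : x.1 = toLex (x.re, x.tag) := rfl
  have hy : y.1 = toLex (y.re, y.tag) := rfl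
  rw [hx, hy, hre, htag]

/-- The partial minus `∸` on `Γ`, made total by returning `0°` outside its domain
`{(x,y) | y ≤ x}`.  On the domain:  `r° ∸ s° = (r−s)°`, `r⁻ ∸ s° = (r−s)⁻`, and
`r° ∸ s⁻ = r⁻ ∸ s⁻ = (r−s)°` if `r−s ∈ ℚ`, `(r−s)⁻` otherwise. -/
def gsub (x y : Gamma) : Gamma :=
  if h : y ≤ x then
    Gamma.mk' (x.re - y.re)
      (if y.tag then x.tag else if (∃ q : ℚ, (q : ℝ) = x.re - y.re) then true else false)
      (by
        have hle : y.re ≤ x.re := Gamma.re_mono h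
        have hx1 := x.re_le_one
        have hy0 := y.re_nonneg
        apply gammaValid_of _ _ (by linarith) (by linarith)
        · intro ht
          split_ifs at ht with hy hq
          · obtain ⟨qx, hqx⟩ := Gamma.tag_rat ht
            obtain ⟨qy, hqy⟩ := Gamma.tag_rat hy
            exact ⟨qx - qy, by push_cast [hqx, hqy]; ring⟩
          · exact hq
        · intro ht
          split_ifs at ht with hy hq
          · rcases Gamma.le_iff.1 h with hlt | ⟨_, htag⟩
            · linarith
            · rw [hy, ht] at htag; exact absurd htag (by decide)
          · refine lt_of_le_of_ne (by linarith) fun e => hq ⟨0, by rw [← e]; norm_num⟩)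
  else gzero

/-- The derived operation `∸'` given by `x ∸' y = ⋁ {x ∸ q° ∣ y < q° ≤ x}`,
described here by its explicit formula (and again made total by `0°` off-domain). -/
def gsub' (x y : Gamma) : Gamma :=
  if h : y ≤ x then
    Gamma.mk' (x.re - y.re)
      (if x.re - y.re = 0 then true
       else if (y.tag = false ∧ ∃ q : ℚ, (q : ℝ) = y.re) then x.tag else false)
      (by
        have hle : y.re ≤ x.re := Gamma.re_mono h
        have hx1 := x.re_le_one
        have hy0 := y.re_nonneg
        apply gammaValid_of _ _ (by linarith) (by linarith)
        · intro ht
          split_ifs at ht with h0 hc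
          · exact ⟨0, by rw [h0]; norm_num⟩
          · obtain ⟨qx, hqx⟩ := Gamma.tag_rat ht
            obtain ⟨qy, hqy⟩ := hc.2
            exact ⟨qx - qy, by push_cast [hqx, hqy]; ring⟩
        · intro ht
          split_ifs at ht with h0 hc
          · exact lt_of_le_of_ne (by linarith) (Ne.symm h0)
          · exact lt_of_le_of_ne (by linarith) (Ne.symm h0))
  else gzero

/-- The partial plus on `Γ` (total, with junk value `0°` when the sum exceeds `1`):
`r° + s° = (r+s)°` and any sum involving a `⁻`-element is a `⁻`-element. -/
def gadd (x y : Gamma) : Gamma :=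
  if h : x.re + y.re ≤ 1 then
    Gamma.mk' (x.re + y.re) (x.tag && y.tag)
      (by
        have hx0 := x.re_nonneg
        have hy0 := y.re_nonneg
        apply gammaValid_of _ _ (by linarith) h
        · intro ht
          rw [Bool.and_eq_true] at ht
          obtain ⟨qx, hqx⟩ := Gamma.tag_rat ht.1
          obtain ⟨qy, hqy⟩ := Gamma.tag_rat ht.2
          exact ⟨qx + qy, by push_cast [hqx, hqy]; ring⟩
        · intro ht
          rcases Bool.and_eq_false_iff.1 ht with hx | hy
          · have := Gamma.tag_pos hx; linarith
          · have := Gamma.tag_pos hy; linarith)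
  else gzero

/-- Finite sums in `Γ` (total, with junk value `0°` when the real sum exceeds `1`):
real parts add up, and the result is a `°`-element iff every summand is. -/
def gsum {α : Type*} (s : Finset α) (f : α → Gamma) : Gamma :=
  if h : ∑ x ∈ s, (f x).re ≤ 1 then
    Gamma.mk' (∑ x ∈ s, (f x).re) (if ∀ x ∈ s, (f x).tag = true then true else false)
      (by
        have h0 : 0 ≤ ∑ x ∈ s, (f x).re :=
          Finset.sum_nonneg fun x _ => (f x).re_nonneg
        apply gammaValid_of _ _ h0 h
        · intro ht
          split_ifs at ht with hall
          · have : ∀ x ∈ s, ∃ q : ℚ, (q : ℝ) = (f x).re := fun x hx => Gamma.tag_rat (hall x hx)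
            choose g hg using this
            refine ⟨∑ x ∈ s.attach, g x.1 x.2, ?_⟩
            push_cast
            rw [← Finset.sum_attach s fun x => (f x).re]
            exact Finset.sum_congr rfl fun x _ => hg x.1 x.2
        · intro ht
          split_ifs at ht with hall
          · push_neg at hall
            obtain ⟨x, hxs, hx⟩ := hall
            replace hx : (f x).tag = false := by
              cases hxt : (f x).tag
              · rfl
              · exact absurd hxt hx
            calc (0:ℝ) < (f x).re := Gamma.tag_pos hx
              _ ≤ _ := Finset.single_le_sum (fun y _ => (f y).re_nonneg) hxs)
  else gzero

/-- The collapsing map `γ : Γ → [0,1]`, `r⁻, r° ↦ r`. -/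
def gammaMap (x : Gamma) : unitInterval := ⟨x.re, x.re_nonneg, x.re_le_one⟩

/-- The section `ι : [0,1] → Γ`: rationals go to `°`-elements, irrationals to `⁻`-elements. -/
def iota (r : unitInterval) : Gamma :=
  if h : ∃ q : ℚ, (q : ℝ) = r.1 then
    Gamma.mk' r.1 true (gammaValid_of _ _ r.2.1 r.2.2 (fun _ => h) (by simp))
  else
    Gamma.mk' r.1 false
      (gammaValid_of _ _ r.2.1 r.2.2 (by simp)
        (fun _ => lt_of_le_of_ne r.2.1 fun e => h ⟨0, by rw [← e]; norm_num⟩))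

/-- Subbasis for the Priestley topology on `Γ`: the sets `↑p°` (for `p ∈ ℚ ∩ [0,1]`) and
`↓q⁻` (for `q ∈ ℚ ∩ (0,1]`). -/
def gammaSubbasis : Set (Set Gamma) :=
  {S | ∃ x : Gamma, x.tag = true ∧ S = Set.Ici x} ∪
  {S | ∃ x : Gamma, x.tag = false ∧ (∃ q : ℚ, (q : ℝ) = x.re) ∧ S = Set.Iic x}

instance : TopologicalSpace Gamma := TopologicalSpace.generateFrom gammaSubbasis

/-- `Γ`-valued (finitely additive, probability) measures on a bounded lattice `D`. -/
def IsGMeasure {D : Type*} [Lattice D] [BoundedOrder D] (μ : D → Gamma) : Prop :=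
  μ ⊥ = gzero ∧ μ ⊤ = gone ∧ Monotone μ ∧
  ∀ a b : D, gsub' (μ a) (μ (a ⊓ b)) ≤ gsub (μ (a ⊔ b)) (μ b) ∧
    gsub' (μ (a ⊔ b)) (μ b) ≤ gsub (μ a) (μ (a ⊓ b))

/-- Classical finitely additive probability measures on a bounded lattice `D`. -/
def IsCMeasure {D : Type*} [Lattice D] [BoundedOrder D] (m : D → ℝ) : Prop :=
  m ⊥ = 0 ∧ m ⊤ = 1 ∧ Monotone m ∧
  ∀ a b : D, m a + m b = m (a ⊔ b) + m (a ⊓ b)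


/-- `Γ` is a linear order (witnessed by totality of `≤`) in which every
subset has a supremum, i.e. it is a complete lattice. -/
theorem gamma_linear_and_complete :
    (∀ x y : Gamma, x ≤ y ∨ y ≤ x) ∧ (∀ S : Set Gamma, ∃ z : Gamma, IsLUB S z) := by
  have hgzero_le : ∀ x : Gamma, gzero ≤ x := by
    intro x
    rw [Gamma.le_iff]
    rcases lt_or_eq_of_le x.re_nonneg with h | h
    · left; exact h
    · right
      refine ⟨h, ?_⟩
      show true ≤ x.tag
      cases ht : x.tag
      · exact absurd (Gamma.tag_pos ht) (by rw [← h]; simp)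
      · exact le_rfl
  refine ⟨fun x y => le_total x y, fun S => ?_⟩
  by_cases hS : S.Nonempty
  · set s := sSup (Gamma.re '' S) with hs
    have hbdd : BddAbove (Gamma.re '' S) := ⟨1, by rintro _ ⟨x, _, rfl⟩; exact x.re_le_one⟩
    have hub : ∀ x ∈ S, x.re ≤ s := fun x hx => le_csSup hbdd ⟨x, hx, rfl⟩
    obtain ⟨x0, hx0⟩ := hS
    have hs1 : s ≤ 1 := csSup_le ⟨x0.re, x0, hx0, rfl⟩ (by rintro _ ⟨x, _, rfl⟩; exact x.re_le_one)
    by_cases hA : ∃ x ∈ S, x.re = s ∧ x.tag = true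
    · obtain ⟨z, hzS, hzre, hztag⟩ := hA
      refine ⟨z, fun y hy => ?_, fun u hu => hu hzS⟩
      rw [Gamma.le_iff]
      rcases lt_or_eq_of_le (hub y hy) with h | h
      · left; rw [hzre]; exact h
      · right; exact ⟨h.trans hzre.symm, hztag ▸ Bool.le_true _⟩
    · have hspos : 0 < s := by
        rcases lt_or_eq_of_le (le_trans x0.re_nonneg (hub x0 hx0)) with h' | h'
        · exact h'
        · exfalso
          have hx0re : x0.re = s := le_antisymm (hub x0 hx0) (h' ▸ x0.re_nonneg)
          refine hA ⟨x0, hx0, hx0re, ?_⟩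
          cases ht : x0.tag
          · have := Gamma.tag_pos ht
            rw [hx0re, ← h'] at this
            exact absurd this (lt_irrefl _)
          · rfl
      refine ⟨mkMinus s hspos hs1, fun y hy => ?_, fun u hu => ?_⟩
      · rw [Gamma.le_iff]
        rcases lt_or_eq_of_le (hub y hy) with h | h
        · left; exact h
        · right
          refine ⟨h, ?_⟩
          show y.tag ≤ false
          cases ht : y.tag
          · exact le_rfl
          · exact absurd ⟨y, hy, h, ht⟩ hA
      · have hsu : s ≤ u.re :=
          csSup_le ⟨x0.re, x0, hx0, rfl⟩ (by rintro _ ⟨x, hx, rfl⟩; exact Gamma.re_mono (hu hx))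
        rw [Gamma.le_iff]
        rcases lt_or_eq_of_le hsu with h | h
        · left; exact h
        · right; exact ⟨h, Bool.false_le _⟩
  · refine ⟨gzero, fun y hy => absurd hy (Set.not_nonempty_iff_eq_empty.1 hS ▸ Set.notMem_empty y),
      fun u _ => hgzero_le u⟩
end
end

section
/- The partial operation ∸ on Γ, defined on pairs (x,y) with y ≤ x by: r° ∸ s° = (r−s)°, r⁻ ∸ s° = (r−s)⁻, and r° ∸ s⁻ = r⁻ ∸ s⁻ = (r−s)° if r−s ∈ ℚ and (r−s)⁻ otherwise, is monotone in the first coordinate and antitone in the second coordinate. -/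
open scoped Classical

noncomputable section

/-- the partial minus `∸` on `Γ` is monotone in the first coordinate and
antitone in the second: if `y ≤ x`, `x ≤ x'` and `y' ≤ y` then `x ∸ y ≤ x' ∸ y'`. -/
theorem gsub_monotone_antitone (x x' y y' : Gamma)
    (hdom : y ≤ x) (hx : x ≤ x') (hy : y' ≤ y) :
    gsub x y ≤ gsub x' y' := by
  have hdom' : y' ≤ x' := le_trans hy (le_trans hdom hx)
  have hxr := Gamma.re_mono hx
  have hyr := Gamma.re_mono hy
  rw [gsub, gsub, dif_pos hdom, dif_pos hdom', Gamma.le_iff]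
  simp only [Gamma.re_mk', Gamma.tag_mk']
  rcases lt_or_eq_of_le (show x.re - y.re ≤ x'.re - y'.re by linarith) with h | h
  · exact Or.inl h
  · refine Or.inr ⟨h, ?_⟩
    have hxe : x.re = x'.re := by linarith
    have hye : y.re = y'.re := by linarith
    have htx : x.tag ≤ x'.tag := by
      rcases Gamma.le_iff.1 hx with hlt | ⟨_, ht⟩
      · exact absurd hxe (ne_of_lt hlt)
      · exact ht
    have hty : y'.tag ≤ y.tag := by
      rcases Gamma.le_iff.1 hy with hlt | ⟨_, ht⟩
      · exact absurd hye.symm (ne_of_lt hlt)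
      · exact ht
    cases hy' : y'.tag <;> cases hyy : y.tag
    case false.false =>
      simp only [if_neg Bool.false_ne_true, h, le_refl]
    case false.true =>
      simp only [if_pos rfl, if_neg Bool.false_ne_true]
      cases hxt : x.tag
      · simp
      · have ⟨qx, hqx⟩ := Gamma.tag_rat hxt
        have ⟨qy, hqy⟩ := Gamma.tag_rat hyy
        have hrat : ∃ q : ℚ, (q : ℝ) = x'.re - y'.re :=
          ⟨qx - qy, by push_cast [hqx, hqy]; linarith⟩
        simp [hrat]
    case true.false =>
      rw [hy', hyy] at hty; exact absurd hty (by decide)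
    case true.true =>
      simpa using htx
end
end

section
/- The partial addition + on Γ, defined on pairs (x,y) with x ≤ 1° ∸ y by r° + s° = (r+s)°, r⁻ + s° = (r+s)⁻, r° + s⁻ = (r+s)⁻, r⁻ + s⁻ = (r+s)⁻, satisfies the adjunction: for all x, z ∈ Γ and y ∈ Γ with both sides defined, x + y ≤ z if and only if x ≤ z ∸ y. -/
open scoped Classical

noncomputable section

/-- the partial addition on `Γ` is adjoint to the partial minus:
whenever both sides are defined (the sum of the real parts of `x` and `y` is at most `1`,
and `y ≤ z`), we have `x + y ≤ z ↔ x ≤ z ∸ y`. -/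
theorem gadd_adjoint_gsub (x y z : Gamma)
    (hadd : x.re + y.re ≤ 1) (hsub : y ≤ z) :
    gadd x y ≤ z ↔ x ≤ gsub z y := by
  rw [gadd, gsub, dif_pos hadd, dif_pos hsub, Gamma.le_iff, Gamma.le_iff]
  simp only [Gamma.re_mk', Gamma.tag_mk']
  constructor
  · rintro (h | ⟨h, ht⟩)
    · exact Or.inl (by linarith)
    · refine Or.inr ⟨by linarith, ?_⟩
      cases hy : y.tag
      · rw [if_neg (by simp)]
        split_ifs with hq
        · simp
        · cases hx : x.tag
          · simp
          · exact absurd ⟨(Gamma.tag_rat hx).choose, by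
              rw [(Gamma.tag_rat hx).choose_spec]; linarith⟩ hq
      · rw [if_pos rfl]
        rw [hy, Bool.and_true] at ht
        exact ht
  · rintro (h | ⟨h, ht⟩)
    · exact Or.inl (by linarith)
    · refine Or.inr ⟨by linarith, ?_⟩
      cases hy : y.tag
      · simp
      · rw [Bool.and_true]
        rwa [if_pos hy] at ht
end
end

section
/- The set dom(∸) = {(x,y) ∈ Γ × Γ : y ≤ x} is a closed up-set in the Priestley space Γ × Γ^op, where Γ carries the topology generated by the sets ↑p° = {x : p° ≤ x} and ↓q⁻ = {x : x ≤ q⁻} for rationals p ∈ [0,1] and q ∈ (0,1]. -/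
open scoped Classical

noncomputable section

/-!
Between any `x < y` in `Γ` lies a jump `q⁻ < q°` at a rational `q` with `x ≤ q⁻` and
`q° ≤ y`: take `q` strictly between the real parts if they differ, and otherwise `x = q⁻`,
`y = q°`. The subbasic open sets `↓q⁻` and `↑q°` then separate `x` from `y`, so the order of
`Γ` is closed, and `dom(∸)` is the preimage of that closed order under `(x, y) ↦ (y, x)`.
-/

theorem orderClosedTopology_of_order_separated {α : Type*} [TopologicalSpace α] [LinearOrder α]
    (h : ∀ a₁ a₂ : α, a₁ < a₂ → ∃ u v : Set α, IsOpen u ∧ IsOpen v ∧ a₁ ∈ u ∧ a₂ ∈ v ∧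
      ∀ b₁ ∈ u, ∀ b₂ ∈ v, b₁ < b₂) :
    OrderClosedTopology α where
  isClosed_le' := isOpen_compl_iff.1 <| isOpen_prod_iff.mpr fun a₁ a₂ h₁₂ =>
    let ⟨u, v, hu, hv, ha₂, ha₁, huv⟩ := h a₂ a₁ (lt_of_not_ge h₁₂)
    ⟨v, u, hv, hu, ha₁, ha₂, fun ⟨b₁, b₂⟩ ⟨hb₁, hb₂⟩ => not_le_of_gt <| huv b₂ hb₂ b₁ hb₁⟩

namespace Gamma

lemma lt_iff {x y : Gamma} : x < y ↔ x.re < y.re ∨ (x.re = y.re ∧ x.tag < y.tag) := by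
  change x.1 < y.1 ↔ _
  rw [show x.1 = toLex (ofLex x.1) from rfl, show y.1 = toLex (ofLex y.1) from rfl,
    Prod.Lex.lt_iff]
  rfl

lemma isOpen_Ici {b : Gamma} (hb : b.tag = true) : IsOpen (Set.Ici b) :=
  .basic _ (.inl ⟨b, hb, rfl⟩)

lemma isOpen_Iic {a : Gamma} (ha : a.tag = false) (hq : ∃ q : ℚ, (q : ℝ) = a.re) :
    IsOpen (Set.Iic a) :=
  .basic _ (.inr ⟨a, ha, hq, rfl⟩)

lemma exists_isOpen_Iic_Ici_between {x y : Gamma} (h : x < y) :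
    ∃ a b : Gamma, IsOpen (Set.Iic a) ∧ IsOpen (Set.Ici b) ∧ x ≤ a ∧ a < b ∧ b ≤ y := by
  rcases lt_iff.1 h with hre | ⟨hre, htag⟩
  · obtain ⟨q, hxq, hqy⟩ := exists_rat_btwn hre
    have hq0 : 0 < (q : ℝ) := x.re_nonneg.trans_lt hxq
    have hq1 : (q : ℝ) ≤ 1 := hqy.le.trans y.re_le_one
    refine ⟨mkMinus q hq0 hq1, mkCirc q (by exact_mod_cast hq0.le) (by exact_mod_cast hq1),
      isOpen_Iic rfl ⟨q, rfl⟩, isOpen_Ici rfl, le_iff.2 (.inl hxq),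
      lt_iff.2 (.inr ⟨rfl, Bool.lt_iff.2 ⟨rfl, rfl⟩⟩), le_iff.2 (.inl hqy)⟩
  · obtain ⟨hx, hy⟩ := Bool.lt_iff.1 htag
    exact ⟨x, y, isOpen_Iic hx (hre ▸ tag_rat hy), isOpen_Ici hy, le_rfl, h, le_rfl⟩

lemma order_separated {x y : Gamma} (h : x < y) :
    ∃ u v : Set Gamma, IsOpen u ∧ IsOpen v ∧ x ∈ u ∧ y ∈ v ∧ ∀ b₁ ∈ u, ∀ b₂ ∈ v, b₁ < b₂ := by
  obtain ⟨a, b, ha, hb, hxa, hab, hby⟩ := exists_isOpen_Iic_Ici_between h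
  exact ⟨Set.Iic a, Set.Ici b, ha, hb, hxa, hby,
    fun b₁ h₁ b₂ h₂ => h₁.trans_lt (hab.trans_le h₂)⟩

instance : OrderClosedTopology Gamma :=
  orderClosedTopology_of_order_separated fun _ _ => order_separated

end Gamma

/-- the domain `{(x,y) | y ≤ x}` of `∸` is a closed up-set in `Γ × Γᵒᵖ`. -/
theorem dom_gsub_closed_upset :
    IsClosed {p : Gamma × Gammaᵒᵈ | OrderDual.ofDual p.2 ≤ p.1} ∧
    IsUpperSet {p : Gamma × Gammaᵒᵈ | OrderDual.ofDual p.2 ≤ p.1} :=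
  ⟨isClosed_le (continuous_ofDual.comp continuous_snd) continuous_fst,
    fun _ _ ⟨hx, hy⟩ h => (OrderDual.ofDual_le_ofDual.2 hy).trans (h.trans hx)⟩
end
end

section
/- The map γ : Γ → [0,1] collapsing r⁻ and r° to r is continuous, where Γ carries the topology generated by the sets ↑p° and ↓q⁻ for rationals p ∈ [0,1], q ∈ (0,1], and [0,1] carries the Euclidean topology. In particular, γ⁻¹((q,1]) = ⋃{↑p° : p ∈ ℚ ∩ [0,1], q < p} and γ⁻¹([0,q)) = ⋃{↓p⁻ : p ∈ ℚ ∩ (0,1], p < q} for every rational q ∈ (0,1). -/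
open scoped Classical

noncomputable section

lemma gamma_mem_gt_iff (a : ℝ) (z : Gamma) :
    a < z.re ↔ ∃ y : Gamma, y.tag = true ∧ a < y.re ∧ y ≤ z := by
  constructor
  · intro h
    cases hz : z.tag with
    | true => exact ⟨z, hz, h, le_refl z⟩
    | false =>
      have h0 := Gamma.tag_pos hz
      obtain ⟨p, hp1, hp2⟩ := exists_rat_btwn (show max a 0 < z.re from max_lt h h0)
      have hp0 : (0:ℝ) ≤ (p:ℝ) := le_of_lt (lt_of_le_of_lt (le_max_right a 0) hp1)
      have hple : (p:ℝ) ≤ 1 := le_of_lt (lt_of_lt_of_le hp2 z.re_le_one)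
      refine ⟨mkCirc p (by exact_mod_cast hp0) (by exact_mod_cast hple), rfl, ?_, ?_⟩
      · exact lt_of_le_of_lt (le_max_left a 0) hp1
      · exact Gamma.le_iff.2 (Or.inl hp2)
  · rintro ⟨y, _, hy, hle⟩
    exact lt_of_lt_of_le hy (Gamma.re_mono hle)

lemma gamma_mem_lt_iff (a : ℝ) (ha : a ≤ 1) (z : Gamma) :
    z.re < a ↔ ∃ y : Gamma, y.tag = false ∧ (∃ p : ℚ, (p : ℝ) = y.re) ∧
      y.re < a ∧ z ≤ y := by
  constructor
  · intro h
    obtain ⟨p, hp1, hp2⟩ := exists_rat_btwn h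
    have hp0 : (0:ℝ) < (p:ℝ) := lt_of_le_of_lt z.re_nonneg hp1
    have hple : (p:ℝ) ≤ 1 := le_trans hp2.le ha
    exact ⟨mkMinus (p:ℝ) hp0 hple, rfl, ⟨p, rfl⟩, hp2, Gamma.le_iff.2 (Or.inl hp1)⟩
  · rintro ⟨y, _, _, hy, hle⟩
    exact lt_of_le_of_lt (Gamma.re_mono hle) hy

lemma gamma_isOpen_gt (a : ℝ) : IsOpen {z : Gamma | a < z.re} := by
  have he : {z : Gamma | a < z.re} =
      ⋃ y ∈ {y : Gamma | y.tag = true ∧ a < y.re}, Set.Ici y := by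
    ext z
    simp only [Set.mem_setOf_eq, Set.mem_iUnion, Set.mem_Ici, exists_prop]
    rw [gamma_mem_gt_iff]
    constructor
    · rintro ⟨y, h1, h2, h3⟩; exact ⟨y, ⟨h1, h2⟩, h3⟩
    · rintro ⟨y, ⟨h1, h2⟩, h3⟩; exact ⟨y, h1, h2, h3⟩
  rw [he]
  exact isOpen_biUnion fun y hy =>
    TopologicalSpace.isOpen_generateFrom_of_mem (Or.inl ⟨y, hy.1, rfl⟩)

lemma gamma_isOpen_lt (a : ℝ) : IsOpen {z : Gamma | z.re < a} := by
  by_cases ha : a ≤ 1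
  · have he : {z : Gamma | z.re < a} =
        ⋃ y ∈ {y : Gamma | y.tag = false ∧ (∃ p : ℚ, (p : ℝ) = y.re) ∧ y.re < a},
          Set.Iic y := by
      ext z
      simp only [Set.mem_setOf_eq, Set.mem_iUnion, Set.mem_Iic, exists_prop]
      rw [gamma_mem_lt_iff a ha]
      constructor
      · rintro ⟨y, h1, h2, h3, h4⟩; exact ⟨y, ⟨h1, h2, h3⟩, h4⟩
      · rintro ⟨y, ⟨h1, h2, h3⟩, h4⟩; exact ⟨y, h1, h2, h3, h4⟩
    rw [he]
    exact isOpen_biUnion fun y hy =>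
      TopologicalSpace.isOpen_generateFrom_of_mem (Or.inr ⟨y, hy.1, hy.2.1, rfl⟩)
  · have he : {z : Gamma | z.re < a} = Set.univ := by
      ext z
      simp only [Set.mem_setOf_eq, Set.mem_univ, iff_true]
      exact lt_of_le_of_lt z.re_le_one (lt_of_not_ge ha)
    rw [he]; exact isOpen_univ

lemma gamma_continuous_re : Continuous (fun z : Gamma => z.re) := by
  rw [continuous_def]
  intro s hs
  rw [OrderTopology.topology_eq_generate_intervals (α := ℝ)] at hs
  induction hs with
  | basic u hu =>
    obtain ⟨b, rfl | rfl⟩ := hu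
    · exact gamma_isOpen_gt b
    · exact gamma_isOpen_lt b
  | univ => exact isOpen_univ
  | inter u v _ _ h1 h2 => exact h1.inter h2
  | sUnion S _ h =>
    rw [Set.preimage_sUnion]
    exact isOpen_biUnion h

/-- the collapsing map `γ : Γ → [0,1]` is continuous; moreover for every
rational `q ∈ (0,1)`, `γ⁻¹((q,1])` is the union of the sets `↑p°` for rationals `p > q`
and `γ⁻¹([0,q))` is the union of the sets `↓p⁻` for rationals `p < q`. -/
theorem gammaMap_continuous :
    Continuous gammaMap ∧
    (∀ q : ℚ, 0 < q → q < 1 →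
      (gammaMap ⁻¹' {x : unitInterval | (q : ℝ) < (x : ℝ)} =
        {z : Gamma | ∃ y : Gamma, y.tag = true ∧ (q : ℝ) < y.re ∧ y ≤ z}) ∧
      (gammaMap ⁻¹' {x : unitInterval | (x : ℝ) < (q : ℝ)} =
        {z : Gamma | ∃ y : Gamma, y.tag = false ∧ (∃ p : ℚ, (p : ℝ) = y.re) ∧
          y.re < (q : ℝ) ∧ z ≤ y})) := by
  refine ⟨Continuous.subtype_mk gamma_continuous_re _, fun q hq0 hq1 => ⟨?_, ?_⟩⟩
  · ext z
    simp only [Set.mem_preimage, Set.mem_setOf_eq]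
    exact gamma_mem_gt_iff (q : ℝ) z
  · ext z
    simp only [Set.mem_preimage, Set.mem_setOf_eq]
    exact gamma_mem_lt_iff (q : ℝ) (by exact_mod_cast hq1.le) z
end
end

section
/- If μ : D → Γ is a Γ-valued measure on a distributive lattice D, then γ ∘ μ : D → [0,1] is a classical finitely additive probability measure: it is monotone, sends 0 to 0 and 1 to 1, and satisfies (γ∘μ)(a) + (γ∘μ)(b) = (γ∘μ)(a∨b) + (γ∘μ)(a∧b) for all a, b ∈ D. -/
open scoped Classical

noncomputable section

lemma gsub_re {x y : Gamma} (h : y ≤ x) : (gsub x y).re = x.re - y.re := by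
  rw [gsub, dif_pos h]; rfl

lemma gsub'_re {x y : Gamma} (h : y ≤ x) : (gsub' x y).re = x.re - y.re := by
  rw [gsub', dif_pos h]; rfl

/-- if `μ : D → Γ` is a `Γ`-valued measure then `γ ∘ μ : D → [0,1]` is a
classical finitely additive probability measure. -/
theorem gamma_comp_gmeasure (D : Type*) [DistribLattice D] [BoundedOrder D]
    (μ : D → Gamma) (hμ : IsGMeasure μ) :
    IsCMeasure (fun a : D => (gammaMap (μ a) : ℝ)) := by
  obtain ⟨hbot, htop, hmono, hmod⟩ := hμ
  refine ⟨by simp [gammaMap, hbot, gzero], by simp [gammaMap, htop, gone], ?_, ?_⟩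
  · intro a b hab
    exact Gamma.re_mono (hmono hab)
  · intro a b
    have h1 : μ (a ⊓ b) ≤ μ a := hmono inf_le_left
    have h2 : μ b ≤ μ (a ⊔ b) := hmono le_sup_right
    have e1 := Gamma.re_mono (hmod a b).1
    have e2 := Gamma.re_mono (hmod a b).2
    rw [gsub'_re h1, gsub_re h2] at e1
    rw [gsub'_re h2, gsub_re h1] at e2
    show (μ a).re + (μ b).re = (μ (a ⊔ b)).re + (μ (a ⊓ b)).re
    linarith
end
end

section
/- If m : D → [0,1] is a classical finitely additive probability measure on a distributive lattice D, then ι ∘ m : D → Γ is a Γ-valued measure, where ι : [0,1] → Γ sends rationals r to r° and irrationals r to r⁻. -/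
open scoped Classical

noncomputable section

lemma iota_re (r : unitInterval) : (iota r).re = r.1 := by
  unfold iota; split_ifs <;> rfl

lemma iota_tag (r : unitInterval) :
    (iota r).tag = if ∃ q : ℚ, (q : ℝ) = r.1 then true else false := by
  unfold iota; split_ifs <;> rfl

lemma iota_mono {r s : unitInterval} (h : r ≤ s) : iota r ≤ iota s := by
  rcases eq_or_lt_of_le h with he | hl
  · rw [he]
  · exact Gamma.le_iff.2 (Or.inl (by rw [iota_re, iota_re]; exact_mod_cast hl))

lemma gsub'_le_gsub {x y x' y' : Gamma} (hyx : y ≤ x) (hyx' : y' ≤ x')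
    (hre : x.re - y.re = x'.re - y'.re)
    (hy : y.tag = false → ¬ ∃ q : ℚ, (q : ℝ) = y.re)
    (hx' : (∃ q : ℚ, (q : ℝ) = x'.re) → x'.tag = true) :
    gsub' x y ≤ gsub x' y' := by
  rw [gsub', gsub, dif_pos hyx, dif_pos hyx']
  apply Gamma.le_iff.2
  refine Or.inr ⟨by simpa using hre, ?_⟩
  simp only [Gamma.tag_mk']
  by_cases h0 : x.re - y.re = 0
  · rw [if_pos h0]
    have h0' : x'.re = y'.re := by linarith [hre ▸ h0]
    cases hy' : y'.tag
    · have : (∃ q : ℚ, (q : ℝ) = x'.re - y'.re) := ⟨0, by rw [h0']; norm_num⟩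
      simp [hy', this]
    · have hxt : x'.tag = true := hx' (h0' ▸ Gamma.tag_rat hy')
      simp [hy', hxt]
  · rw [if_neg h0]
    have hcond : ¬ (y.tag = false ∧ ∃ q : ℚ, (q : ℝ) = y.re) := by
      rintro ⟨h1, h2⟩; exact hy h1 h2
    rw [if_neg hcond]
    exact Bool.false_le _

/-- if `m : D → [0,1]` is a classical finitely additive probability measure
then `ι ∘ m : D → Γ` is a `Γ`-valued measure. -/
theorem iota_comp_cmeasure (D : Type*) [DistribLattice D] [BoundedOrder D]
    (m : D → ℝ) (hm : IsCMeasure m) (hm01 : ∀ a : D, m a ∈ Set.Icc (0 : ℝ) 1) :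
    IsGMeasure (fun a : D => iota ⟨m a, hm01 a⟩) := by
  obtain ⟨hbot, htop, hmono, hadd⟩ := hm
  have hiota_tag_false : ∀ a : D,
      (iota ⟨m a, hm01 a⟩).tag = false → ¬ ∃ q : ℚ, (q : ℝ) = (iota ⟨m a, hm01 a⟩).re := by
    intro a hf
    rw [iota_re]
    rw [iota_tag] at hf
    intro hq
    rw [if_pos hq] at hf
    exact absurd hf (by decide)
  have hiota_tag_true : ∀ a : D,
      (∃ q : ℚ, (q : ℝ) = (iota ⟨m a, hm01 a⟩).re) → (iota ⟨m a, hm01 a⟩).tag = true := by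
    intro a hq
    rw [iota_re] at hq
    rw [iota_tag, if_pos hq]
  have hmono' : Monotone (fun a : D => iota ⟨m a, hm01 a⟩) := by
    intro a b hab
    exact iota_mono (Subtype.mk_le_mk.2 (hmono hab))
  refine ⟨?_, ?_, hmono', ?_⟩
  · apply Gamma.ext'
    · rw [iota_re]; simpa [gzero] using hbot
    · rw [iota_tag, if_pos ⟨0, by simp [hbot]⟩]; rfl
  · apply Gamma.ext'
    · rw [iota_re]; simpa [gone] using htop
    · rw [iota_tag, if_pos ⟨1, by simp [htop]⟩]; rfl
  · intro a b
    have hre : ∀ c : D, (iota ⟨m c, hm01 c⟩).re = m c := fun c => iota_re _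
    have hmod := hadd a b
    constructor
    · exact gsub'_le_gsub (hmono' inf_le_left) (hmono' le_sup_right)
        (by rw [hre, hre, hre, hre]; linarith) (hiota_tag_false _) (hiota_tag_true _)
    · exact gsub'_le_gsub (hmono' le_sup_right) (hmono' inf_le_left)
        (by rw [hre, hre, hre, hre]; linarith) (hiota_tag_false _) (hiota_tag_true _)
end
end
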